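/- arXiv:q-alg/9609033 — 2 statements merged into one kernel-verified Lean document; each statement's English description precedes it below -/
import Mathlib

section
/- For every site r : Fin L, the anyonic oscillators satisfy: a(r)a†(r) + a†(r)a(r) = 1 (the identity map on V), a(r)∘a(r) = 0, and a†(r)∘a†(r) = 0. -/
/-!
Anyonic oscillators on a one-dimensional lattice `Fin L`, built from fermionic
oscillators on the fermionic Fock space `(Fin L → Bool) →₀ ℂ` and disorder factors.
-/

noncomputable section

/-- The fermionic Fock space on a lattice of `L` sites. -/
abbrev FSpace (L : ℕ) : Type := (Fin L → Bool) →₀ ℂ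

/-- The Jordan–Wigner sign `(−1)^{#{t < r : f t = true}}`. -/
def fSign {L : ℕ} (f : Fin L → Bool) (r : Fin L) : ℂ :=
  (-1 : ℂ) ^ (Finset.univ.filter fun t => t < r ∧ f t = true).card

/-- The fermionic annihilation operator `c(r)`. -/
def cAnn {L : ℕ} (r : Fin L) : Module.End ℂ (FSpace L) :=
  Finsupp.lift (FSpace L) ℂ (Fin L → Bool) fun f =>
    if f r = true then fSign f r • Finsupp.single (Function.update f r false) (1 : ℂ) else 0

/-- The fermionic creation operator `c†(r)`. -/
def cCre {L : ℕ} (r : Fin L) : Module.End ℂ (FSpace L) :=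
  Finsupp.lift (FSpace L) ℂ (Fin L → Bool) fun f =>
    if f r = false then fSign f r • Finsupp.single (Function.update f r true) (1 : ℂ) else 0

/-- The number operator `n(r) : |f⟩ ↦ f(r)·|f⟩`. -/
def nOp {L : ℕ} (r : Fin L) : Module.End ℂ (FSpace L) :=
  Finsupp.lift (FSpace L) ℂ (Fin L → Bool) fun f =>
    (if f r = true then (1 : ℂ) else 0) • Finsupp.single f (1 : ℂ)

/-- The exponent `Σ_t ε(t−r) f(t)`, where `ε` is the sign function. -/
def fExp {L : ℕ} (r : Fin L) (f : Fin L → Bool) : ℤ :=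
  ∑ t : Fin L, Int.sign (((t : ℕ) : ℤ) - ((r : ℕ) : ℤ)) * (if f t = true then 1 else 0)

/-- The disorder operator `K⁺(r) : |f⟩ ↦ p^{Σ_t ε(t−r) f(t)} |f⟩`. -/
def Kplus {L : ℕ} (p : ℂ) (r : Fin L) : Module.End ℂ (FSpace L) :=
  Finsupp.lift (FSpace L) ℂ (Fin L → Bool) fun f =>
    (p ^ fExp r f) • Finsupp.single f (1 : ℂ)

/-- The disorder operator `K⁻(r) : |f⟩ ↦ p^{−Σ_t ε(t−r) f(t)} |f⟩`. -/
def Kminus {L : ℕ} (p : ℂ) (r : Fin L) : Module.End ℂ (FSpace L) :=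
  Finsupp.lift (FSpace L) ℂ (Fin L → Bool) fun f =>
    (p ^ (-fExp r f)) • Finsupp.single f (1 : ℂ)

/-- The anyonic oscillator `a(r) = K⁻(r) ∘ c(r)`. -/
def aAnn {L : ℕ} (p : ℂ) (r : Fin L) : Module.End ℂ (FSpace L) := Kminus p r * cAnn r

/-- The anyonic oscillator `a†(r) = K⁺(r) ∘ c†(r)`. -/
def aCre {L : ℕ} (p : ℂ) (r : Fin L) : Module.End ℂ (FSpace L) := Kplus p r * cCre r

/-- The anyonic oscillator `ã(r) = K⁺(r) ∘ c(r)`. -/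
def taAnn {L : ℕ} (p : ℂ) (r : Fin L) : Module.End ℂ (FSpace L) := Kplus p r * cAnn r

/-- The anyonic oscillator `ã†(r) = K⁻(r) ∘ c†(r)`. -/
def taCre {L : ℕ} (p : ℂ) (r : Fin L) : Module.End ℂ (FSpace L) := Kminus p r * cCre r

section Aux

variable {L : ℕ}

lemma lift_single {M : Type*} [AddCommMonoid M] [Module ℂ M]
    (g : (Fin L → Bool) → M) (f : Fin L → Bool) :
    Finsupp.lift M ℂ (Fin L → Bool) g (Finsupp.single f 1) = g f := by
  simp [Finsupp.lift_apply, Finsupp.sum_single_index]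

lemma fSign_update (f : Fin L → Bool) (r : Fin L) (b : Bool) :
    fSign (Function.update f r b) r = fSign f r := by
  unfold fSign
  have : (Finset.univ.filter fun t => t < r ∧ Function.update f r b t = true)
      = Finset.univ.filter fun t => t < r ∧ f t = true := by
    apply Finset.filter_congr
    intro t _
    by_cases h : t = r
    · subst h; simp
    · rw [Function.update_of_ne h]
  rw [this]

lemma fExp_update (r : Fin L) (f : Fin L → Bool) (b : Bool) :
    fExp r (Function.update f r b) = fExp r f := by
  unfold fExp
  apply Finset.sum_congr rfl
  intro t _
  by_cases h : t = r
  · subst h; simp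
  · rw [Function.update_of_ne h]

lemma fSign_mul_self (f : Fin L → Bool) (r : Fin L) : fSign f r * fSign f r = 1 := by
  unfold fSign
  rw [← pow_add]
  exact Even.neg_one_pow ⟨_, rfl⟩

lemma cAnn_single (r : Fin L) (f : Fin L → Bool) :
    cAnn r (Finsupp.single f 1) =
      if f r = true then fSign f r • Finsupp.single (Function.update f r false) (1 : ℂ)
      else 0 :=
  lift_single _ f

lemma cCre_single (r : Fin L) (f : Fin L → Bool) :
    cCre r (Finsupp.single f 1) =
      if f r = false then fSign f r • Finsupp.single (Function.update f r true) (1 : ℂ)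
      else 0 :=
  lift_single _ f

lemma Kplus_single (p : ℂ) (r : Fin L) (f : Fin L → Bool) :
    Kplus p r (Finsupp.single f 1) = (p ^ fExp r f) • Finsupp.single f (1 : ℂ) :=
  lift_single _ f

lemma Kminus_single (p : ℂ) (r : Fin L) (f : Fin L → Bool) :
    Kminus p r (Finsupp.single f 1) = (p ^ (-fExp r f)) • Finsupp.single f (1 : ℂ) :=
  lift_single _ f

end Aux

/-- same-site relations of the anyonic oscillators. -/
theorem anyon_same_site (L : ℕ) (hL : 1 ≤ L) (p : ℂ) (hp : p ≠ 0)
    (q : ℂ) (hq : q = p ^ 2) (r : Fin L) :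
    aAnn p r * aCre p r + aCre p r * aAnn p r = 1 ∧
    aAnn p r * aAnn p r = 0 ∧
    aCre p r * aCre p r = 0 := by
  have key : ∀ (A B : Module.End ℂ (FSpace L)),
      (∀ f : Fin L → Bool, A (Finsupp.single f 1) = B (Finsupp.single f 1)) → A = B := by
    intro A B h
    apply Finsupp.lhom_ext
    intro f b
    have hb : (Finsupp.single f b : FSpace L) = b • Finsupp.single f 1 := by
      simp [Finsupp.smul_single]
    rw [hb, map_smul, map_smul, h]
  have hz : ∀ e : ℤ, p ^ (-e) * p ^ e = 1 := fun e => by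
    rw [zpow_neg, inv_mul_cancel₀ (zpow_ne_zero _ hp)]
  refine ⟨key _ _ ?_, key _ _ ?_, key _ _ ?_⟩
  · intro f
    simp only [aAnn, aCre, LinearMap.add_apply, Module.End.mul_apply, Module.End.one_apply]
    by_cases h : f r = true
    · have hup : Function.update f r true = f := by
        rw [← h]; exact Function.update_eq_self r f
      rw [cCre_single, if_neg (by simp [h]), map_zero, map_zero, map_zero, zero_add,
        cAnn_single, if_pos h]
      simp only [map_smul]
      rw [Kminus_single]
      simp only [map_smul]
      rw [cCre_single, if_pos (Function.update_self r false f)]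
      simp only [map_smul]
      rw [Kplus_single, Function.update_idem, hup, fExp_update, fSign_update]
      simp only [smul_smul, Module.End.one_apply]
      rw [show fSign f r * (p ^ (-fExp r f) * (fSign f r * p ^ fExp r f))
          = (fSign f r * fSign f r) * (p ^ (-fExp r f) * p ^ fExp r f) by ring,
        fSign_mul_self, hz, one_mul, one_smul]
    · have h' : f r = false := by simpa using h
      have hup : Function.update f r false = f := by
        rw [← h']; exact Function.update_eq_self r f
      rw [cAnn_single, if_neg (by simp [h']), map_zero, map_zero, map_zero, add_zero,
        cCre_single, if_pos h']
      simp only [map_smul]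
      rw [Kplus_single]
      simp only [map_smul]
      rw [cAnn_single, if_pos (Function.update_self r true f)]
      simp only [map_smul]
      rw [Kminus_single, Function.update_idem, hup, fExp_update, fSign_update]
      simp only [smul_smul, Module.End.one_apply]
      rw [show fSign f r * (p ^ fExp r f * (fSign f r * p ^ (-fExp r f)))
          = (fSign f r * fSign f r) * (p ^ (-fExp r f) * p ^ fExp r f) by ring,
        fSign_mul_self, hz, one_mul, one_smul]
  · intro f
    simp only [aAnn, LinearMap.add_apply, Module.End.mul_apply, LinearMap.zero_apply]
    by_cases h : f r = true
    · rw [cAnn_single, if_pos h]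
      simp only [map_smul]
      rw [Kminus_single]
      simp only [map_smul]
      rw [cAnn_single, if_neg (by simp [Function.update_self])]
      simp
    · rw [cAnn_single, if_neg h]
      simp
  · intro f
    simp only [aCre, LinearMap.add_apply, Module.End.mul_apply, LinearMap.zero_apply]
    by_cases h : f r = false
    · rw [cCre_single, if_pos h]
      simp only [map_smul]
      rw [Kplus_single]
      simp only [map_smul]
      rw [cCre_single, if_neg (by simp [Function.update_self])]
      simp
    · rw [cCre_single, if_neg h]
      simp

end
end

section
/- For every site r : Fin L, the local odd anyonic generators factorize as undeformed local generators times a disorder factor: a_M†(r) A_1(r) = (c_M†(r) b_1(r)) ∘ D_M(r) and Ã_1†(r) ã_M(r) = (b_1†(r) c_M(r)) ∘ D_M(r), where D_M(r) is the diagonal operator |f, g⟩ ↦ p^{Σ_t ε(t−r)(f(M,t) + g(1,t))} |f, g⟩ (that is, q_M^{(1/2)Σ_t ε(t−r) h_M(t)} with h_M(t) the local Cartan eigenvalue f(M,t) + g(1,t) and q_M = q). -/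
/-!
Anyonic realization of `U_q(A(M−1,N−1))` on the mixed Fock space of `M` fermionic
and `N` (`q`-deformed) bosonic colours on a one-dimensional lattice `Fin L`.
-/

noncomputable section

/-- Configurations: fermionic occupations (Bool) and bosonic occupations (ℕ). -/
abbrev Cfg (M N L : ℕ) : Type := ((Fin M × Fin L) → Bool) × ((Fin N × Fin L) → ℕ)

/-- The mixed Fock space. -/
abbrev FS (M N L : ℕ) : Type := Cfg M N L →₀ ℂ

/-- The `q`-integer `[x]_q = (q^x − q^{−x})/(q − q⁻¹)`. -/
def qInt (q : ℂ) (x : ℤ) : ℂ := (q ^ x - q ^ (-x)) / (q - q⁻¹)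

/-- Lexicographic order on the fermionic modes `(i, r)`. -/
def lexLt {M L : ℕ} (x y : Fin M × Fin L) : Prop :=
  x.1 < y.1 ∨ (x.1 = y.1 ∧ x.2 < y.2)

instance {M L : ℕ} (x y : Fin M × Fin L) : Decidable (lexLt x y) := by
  unfold lexLt; infer_instance

/-- The Jordan–Wigner sign `(−1)^{#{(j,t) < (i,r) : f(j,t) = true}}`. -/
def fSgn {M L : ℕ} (f : (Fin M × Fin L) → Bool) (i : Fin M) (r : Fin L) : ℂ :=
  (-1 : ℂ) ^ (Finset.univ.filter fun jt : Fin M × Fin L => lexLt jt (i, r) ∧ f jt = true).card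

/-- The fermionic annihilation operator `c_i(r)`. -/
def cA (M N L : ℕ) (i : Fin M) (r : Fin L) : Module.End ℂ (FS M N L) :=
  Finsupp.lift (FS M N L) ℂ (Cfg M N L) fun x =>
    if x.1 (i, r) = true then
      fSgn x.1 i r • Finsupp.single (Function.update x.1 (i, r) false, x.2) (1 : ℂ)
    else 0

/-- The fermionic creation operator `c_i†(r)`. -/
def cC (M N L : ℕ) (i : Fin M) (r : Fin L) : Module.End ℂ (FS M N L) :=
  Finsupp.lift (FS M N L) ℂ (Cfg M N L) fun x =>
    if x.1 (i, r) = false then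
      fSgn x.1 i r • Finsupp.single (Function.update x.1 (i, r) true, x.2) (1 : ℂ)
    else 0

/-- The fermionic number operator `n_i(r)`. -/
def nF (M N L : ℕ) (i : Fin M) (r : Fin L) : Module.End ℂ (FS M N L) :=
  Finsupp.lift (FS M N L) ℂ (Cfg M N L) fun x =>
    (if x.1 (i, r) = true then (1 : ℂ) else 0) • Finsupp.single x (1 : ℂ)

/-- The `q`-deformed bosonic annihilation operator `b_k(r)`. -/
def bA (M N L : ℕ) (s : ℤ → ℂ) (k : Fin N) (r : Fin L) : Module.End ℂ (FS M N L) :=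
  Finsupp.lift (FS M N L) ℂ (Cfg M N L) fun x =>
    if x.2 (k, r) = 0 then 0
    else s (x.2 (k, r)) •
      Finsupp.single (x.1, Function.update x.2 (k, r) (x.2 (k, r) - 1)) (1 : ℂ)

/-- The `q`-deformed bosonic creation operator `b_k†(r)`. -/
def bC (M N L : ℕ) (s : ℤ → ℂ) (k : Fin N) (r : Fin L) : Module.End ℂ (FS M N L) :=
  Finsupp.lift (FS M N L) ℂ (Cfg M N L) fun x =>
    s ((x.2 (k, r) : ℤ) + 1) •
      Finsupp.single (x.1, Function.update x.2 (k, r) (x.2 (k, r) + 1)) (1 : ℂ)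

/-- The bosonic number operator `n'_k(r)`. -/
def nB (M N L : ℕ) (k : Fin N) (r : Fin L) : Module.End ℂ (FS M N L) :=
  Finsupp.lift (FS M N L) ℂ (Cfg M N L) fun x =>
    ((x.2 (k, r) : ℂ)) • Finsupp.single x (1 : ℂ)

/-- The fermionic disorder exponent `Σ_t ε(t−r) f(i,t)`. -/
def fEx {M N L : ℕ} (i : Fin M) (r : Fin L) (x : Cfg M N L) : ℤ :=
  ∑ t : Fin L, Int.sign (((t : ℕ) : ℤ) - ((r : ℕ) : ℤ)) * (if x.1 (i, t) = true then 1 else 0)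

/-- The bosonic disorder exponent `Σ_t ε(t−r) g(k,t)`. -/
def gEx {M N L : ℕ} (k : Fin N) (r : Fin L) (x : Cfg M N L) : ℤ :=
  ∑ t : Fin L, Int.sign (((t : ℕ) : ℤ) - ((r : ℕ) : ℤ)) * (x.2 (k, t) : ℤ)

/-- The fermionic disorder operator `F_i^σ(r) : |f,g⟩ ↦ p^{σ·Σ_t ε(t−r) f(i,t)}|f,g⟩`. -/
def Fdis (M N L : ℕ) (p : ℂ) (σ : ℤ) (i : Fin M) (r : Fin L) : Module.End ℂ (FS M N L) :=
  Finsupp.lift (FS M N L) ℂ (Cfg M N L) fun x =>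
    (p ^ (σ * fEx i r x)) • Finsupp.single x (1 : ℂ)

/-- The bosonic disorder operator `G_k^σ(r) : |f,g⟩ ↦ p^{σ·Σ_t ε(t−r) g(k,t)}|f,g⟩`. -/
def Gdis (M N L : ℕ) (p : ℂ) (σ : ℤ) (k : Fin N) (r : Fin L) : Module.End ℂ (FS M N L) :=
  Finsupp.lift (FS M N L) ℂ (Cfg M N L) fun x =>
    (p ^ (σ * gEx k r x)) • Finsupp.single x (1 : ℂ)

/-- The fermionic anyon `a_i(r) = F_i^−(r) ∘ c_i(r)`. -/
def aAny (M N L : ℕ) (p : ℂ) (i : Fin M) (r : Fin L) : Module.End ℂ (FS M N L) :=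
  Fdis M N L p (-1) i r * cA M N L i r

/-- The fermionic anyon `a_i†(r) = F_i^+(r) ∘ c_i†(r)`. -/
def aDag (M N L : ℕ) (p : ℂ) (i : Fin M) (r : Fin L) : Module.End ℂ (FS M N L) :=
  Fdis M N L p 1 i r * cC M N L i r

/-- The fermionic anyon `ã_i(r) = F_i^+(r) ∘ c_i(r)`. -/
def taAny (M N L : ℕ) (p : ℂ) (i : Fin M) (r : Fin L) : Module.End ℂ (FS M N L) :=
  Fdis M N L p 1 i r * cA M N L i r

/-- The fermionic anyon `ã_i†(r) = F_i^−(r) ∘ c_i†(r)`. -/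
def taDag (M N L : ℕ) (p : ℂ) (i : Fin M) (r : Fin L) : Module.End ℂ (FS M N L) :=
  Fdis M N L p (-1) i r * cC M N L i r

/-- The bosonic anyon `A_k(r) = G_k^+(r) ∘ b_k(r)`. -/
def AAny (M N L : ℕ) (p : ℂ) (s : ℤ → ℂ) (k : Fin N) (r : Fin L) : Module.End ℂ (FS M N L) :=
  Gdis M N L p 1 k r * bA M N L s k r

/-- The bosonic anyon `A_k†(r) = G_k^−(r) ∘ b_k†(r)`. -/
def ADag (M N L : ℕ) (p : ℂ) (s : ℤ → ℂ) (k : Fin N) (r : Fin L) : Module.End ℂ (FS M N L) :=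
  Gdis M N L p (-1) k r * bC M N L s k r

/-- The bosonic anyon `Ã_k(r) = G_k^−(r) ∘ b_k(r)`. -/
def tAAny (M N L : ℕ) (p : ℂ) (s : ℤ → ℂ) (k : Fin N) (r : Fin L) : Module.End ℂ (FS M N L) :=
  Gdis M N L p (-1) k r * bA M N L s k r

/-- The bosonic anyon `Ã_k†(r) = G_k^+(r) ∘ b_k†(r)`. -/
def tADag (M N L : ℕ) (p : ℂ) (s : ℤ → ℂ) (k : Fin N) (r : Fin L) : Module.End ℂ (FS M N L) :=
  Gdis M N L p 1 k r * bC M N L s k r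

/-- The Cartan generator `H_α` (labels `α = 1, …, M+N−1`). -/
def Hg (M N L : ℕ) (α : ℕ) : Module.End ℂ (FS M N L) :=
  if h : 1 ≤ α ∧ α < M then
    ∑ r : Fin L, (nF M N L ⟨α - 1, by omega⟩ r - nF M N L ⟨α, by omega⟩ r)
  else if h : α = M ∧ 1 ≤ M ∧ 1 ≤ N then
    ∑ r : Fin L, (nF M N L ⟨M - 1, by omega⟩ r + nB M N L ⟨0, by omega⟩ r)
  else if h : M < α ∧ α ≤ M + N - 1 then
    ∑ r : Fin L, (nB M N L ⟨α - M - 1, by omega⟩ r - nB M N L ⟨α - M, by omega⟩ r)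
  else 0

/-- The raising generator `E_α^+` (labels `α = 1, …, M+N−1`). -/
def Ep (M N L : ℕ) (p : ℂ) (s : ℤ → ℂ) (α : ℕ) : Module.End ℂ (FS M N L) :=
  if h : 1 ≤ α ∧ α < M then
    ∑ r : Fin L, aDag M N L p ⟨α - 1, by omega⟩ r * aAny M N L p ⟨α, by omega⟩ r
  else if h : α = M ∧ 1 ≤ M ∧ 1 ≤ N then
    ∑ r : Fin L, aDag M N L p ⟨M - 1, by omega⟩ r * AAny M N L p s ⟨0, by omega⟩ r
  else if h : M < α ∧ α ≤ M + N - 1 then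
    ∑ r : Fin L, ADag M N L p s ⟨α - M - 1, by omega⟩ r * AAny M N L p s ⟨α - M, by omega⟩ r
  else 0

/-- The lowering generator `E_α^−` (labels `α = 1, …, M+N−1`). -/
def Em (M N L : ℕ) (p : ℂ) (s : ℤ → ℂ) (α : ℕ) : Module.End ℂ (FS M N L) :=
  if h : 1 ≤ α ∧ α < M then
    ∑ r : Fin L, taDag M N L p ⟨α, by omega⟩ r * taAny M N L p ⟨α - 1, by omega⟩ r
  else if h : α = M ∧ 1 ≤ M ∧ 1 ≤ N then
    ∑ r : Fin L, tADag M N L p s ⟨0, by omega⟩ r * taAny M N L p ⟨M - 1, by omega⟩ r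
  else if h : M < α ∧ α ≤ M + N - 1 then
    ∑ r : Fin L, tADag M N L p s ⟨α - M, by omega⟩ r * tAAny M N L p s ⟨α - M - 1, by omega⟩ r
  else 0

/-- The diagonal disorder factor attached to the odd simple root,
`D_M(r) : |f,g⟩ ↦ p^{Σ_t ε(t−r)(f(M,t) + g(1,t))} |f,g⟩`. -/
def DoddDiag (M N L : ℕ) (p : ℂ) (i : Fin M) (k : Fin N) (r : Fin L) :
    Module.End ℂ (FS M N L) :=
  Finsupp.lift (FS M N L) ℂ (Cfg M N L) fun x =>
    (p ^ (∑ t : Fin L, Int.sign (((t : ℕ) : ℤ) - ((r : ℕ) : ℤ)) *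
        ((if x.1 (i, t) = true then 1 else 0) + (x.2 (k, t) : ℤ)))) •
      Finsupp.single x (1 : ℂ)


/-- Auxiliary: the fermionic disorder exponent as a function of `f` only. -/
def fexF {M L : ℕ} (i : Fin M) (r : Fin L) (f : (Fin M × Fin L) → Bool) : ℤ :=
  ∑ t : Fin L, Int.sign (((t : ℕ) : ℤ) - ((r : ℕ) : ℤ)) * (if f (i, t) = true then 1 else 0)

/-- Auxiliary: the bosonic disorder exponent as a function of `g` only. -/
def gexG {N L : ℕ} (k : Fin N) (r : Fin L) (g : (Fin N × Fin L) → ℕ) : ℤ :=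
  ∑ t : Fin L, Int.sign (((t : ℕ) : ℤ) - ((r : ℕ) : ℤ)) * (g (k, t) : ℤ)

lemma fEx_eq {M N L : ℕ} (i : Fin M) (r : Fin L) (x : Cfg M N L) :
    fEx i r x = fexF i r x.1 := rfl

lemma gEx_eq {M N L : ℕ} (k : Fin N) (r : Fin L) (x : Cfg M N L) :
    gEx k r x = gexG k r x.2 := rfl

lemma fexF_upd {M L : ℕ} (i : Fin M) (r : Fin L) (f : (Fin M × Fin L) → Bool) (v : Bool) :
    fexF i r (Function.update f (i, r) v) = fexF i r f := by
  unfold fexF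
  refine Finset.sum_congr rfl fun t _ => ?_
  by_cases ht : t = r
  · subst ht; simp
  · have hne : ((i, t) : Fin M × Fin L) ≠ (i, r) := by simp [Prod.ext_iff, ht]
    rw [Function.update_of_ne hne]

lemma gexG_upd {N L : ℕ} (k : Fin N) (r : Fin L) (g : (Fin N × Fin L) → ℕ) (v : ℕ) :
    gexG k r (Function.update g (k, r) v) = gexG k r g := by
  unfold gexG
  refine Finset.sum_congr rfl fun t _ => ?_
  by_cases ht : t = r
  · subst ht; simp
  · have hne : ((k, t) : Fin N × Fin L) ≠ (k, r) := by simp [Prod.ext_iff, ht]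
    rw [Function.update_of_ne hne]

lemma dExp_split {M N L : ℕ} (i : Fin M) (k : Fin N) (r : Fin L) (x : Cfg M N L) :
    (∑ t : Fin L, Int.sign (((t : ℕ) : ℤ) - ((r : ℕ) : ℤ)) *
        ((if x.1 (i, t) = true then 1 else 0) + (x.2 (k, t) : ℤ)))
      = fexF i r x.1 + gexG k r x.2 := by
  unfold fexF gexG
  rw [← Finset.sum_add_distrib]
  exact Finset.sum_congr rfl fun t _ => mul_add _ _ _

lemma lift_single_s9 {M N L : ℕ} (F : Cfg M N L → FS M N L) (x : Cfg M N L) (b : ℂ) :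
    Finsupp.lift (FS M N L) ℂ (Cfg M N L) F (Finsupp.single x b) = b • F x := by
  simp [Finsupp.lift_apply, Finsupp.sum_single_index]

/-- factorization of the local odd anyonic generators as undeformed
local generators times a disorder factor. -/
theorem local_odd_generator_factorization
    (M N L : ℕ) (hM : 1 ≤ M) (hN : 1 ≤ N) (hMN : 3 ≤ M + N) (hL : 1 ≤ L)
    (p : ℂ) (hp : p ≠ 0) (hp4 : p ^ 4 ≠ 1) (q : ℂ) (hq : q = p ^ 2)
    (s : ℤ → ℂ) (hs : ∀ n : ℤ, s n ^ 2 = qInt q n) (r : Fin L) :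
    aDag M N L p ⟨M - 1, by omega⟩ r * AAny M N L p s ⟨0, by omega⟩ r
      = (cC M N L ⟨M - 1, by omega⟩ r * bA M N L s ⟨0, by omega⟩ r) *
          DoddDiag M N L p ⟨M - 1, by omega⟩ ⟨0, by omega⟩ r ∧
    tADag M N L p s ⟨0, by omega⟩ r * taAny M N L p ⟨M - 1, by omega⟩ r
      = (bC M N L s ⟨0, by omega⟩ r * cA M N L ⟨M - 1, by omega⟩ r) *
          DoddDiag M N L p ⟨M - 1, by omega⟩ ⟨0, by omega⟩ r := by
  set i : Fin M := ⟨M - 1, by omega⟩ with hi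
  set k : Fin N := ⟨0, by omega⟩ with hk
  constructor
  · unfold aDag AAny cC bA Fdis Gdis DoddDiag
    refine Finsupp.lhom_ext fun x b => ?_
    by_cases hg : x.2 (k, r) = 0
    · simp only [Module.End.mul_apply, lift_single_s9, map_smul, smul_smul, one_smul,
        if_pos hg, smul_zero, map_zero]
    · by_cases hf : x.1 (i, r) = false
      · simp only [Module.End.mul_apply, lift_single_s9, map_smul, smul_smul, if_neg hg,
          if_pos hf, Prod.fst, Prod.snd, Function.update_of_ne, smul_eq_mul]
        simp only [fEx_eq, gEx_eq, dExp_split, fexF_upd, gexG_upd, one_mul,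
          Prod.fst, Prod.snd]
        rw [zpow_add₀ hp]
        ring_nf
      · simp only [Module.End.mul_apply, lift_single_s9, map_smul, smul_smul, one_smul,
          if_neg hg, if_neg hf, smul_zero, map_zero, Prod.fst, Prod.snd]
  · unfold tADag taAny bC cA Fdis Gdis DoddDiag
    refine Finsupp.lhom_ext fun x b => ?_
    by_cases hf : x.1 (i, r) = true
    · simp only [Module.End.mul_apply, lift_single_s9, map_smul, smul_smul, if_pos hf,
        Prod.fst, Prod.snd, smul_eq_mul]
      simp only [fEx_eq, gEx_eq, dExp_split, fexF_upd, gexG_upd, one_mul,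
        Prod.fst, Prod.snd]
      rw [zpow_add₀ hp]
      ring_nf
    · simp only [Module.End.mul_apply, lift_single_s9, map_smul, smul_smul, one_smul,
        if_neg hf, smul_zero, map_zero, Prod.fst, Prod.snd]


end
end
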